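/- arXiv:2301.03919 — 2 statements merged into one kernel-verified Lean document; each statement's English description precedes it below -/
import Mathlib

section
/- Let Q(z) = Σ_{k=1}^N (−c_k z^k/k + conj(c_k) z^{−k}/k) with c_N > 0 and let θ_k = (2k−1)π/N. For every δ ∈ (0, π/(2N)) there exist a_N(δ) > 0 and r₀ > 0 such that for all z with 0 < |z| ≤ r₀ and |arg(z) − θ_k| ≤ π/(2N) − δ, one has Re[Q(z)] ≤ −a_N(δ)/|z|^N. -/
/-! In polar form `z = r e^{i(θ + φ)}`, the summand `conj(c_N) z^{-N}/N` has real part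
`c_N cos(N(θ + φ))/(N r^N) = -c_N cos(Nφ)/(N r^N)`, since `Nθ` is an odd multiple of `π`, and
`cos(Nφ) ≥ sin(Nδ) > 0` on the subsector. For `r ≤ 1` every other summand is bounded in norm
by a multiple of `r^{1-N}`, so for small `r` it is absorbed into half of the leading term. -/

open Complex

open Real in
theorem Real.sin_le_cos_of_abs_le {x y : ℝ} (hy : -(π / 2) ≤ y) (h : |x| ≤ π / 2 - y) :
    sin y ≤ cos x := by
  rw [← cos_pi_div_two_sub, ← cos_abs x]
  exact cos_le_cos_of_nonneg_of_le_pi (abs_nonneg x) (by linarith) h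

open Real in
theorem Real.sin_natCast_mul_pos {N : ℕ} (hN : 0 < N) {δ : ℝ}
    (hδ : δ ∈ Set.Ioo 0 (π / (2 * N))) : 0 < sin (N * δ) := by
  obtain ⟨hδ0, hδlt⟩ := hδ
  rw [lt_div_iff₀ (by positivity)] at hδlt
  exact sin_pos_of_pos_of_lt_pi (by positivity) (by nlinarith [pi_pos])

open Real in
theorem Real.cos_mul_odd_mul_pi_div_add {t : ℝ} (ht : t ≠ 0) (k : ℤ) (φ : ℝ) :
    cos (t * ((2 * k - 1) * π / t + φ)) = -cos (t * φ) := by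
  have : t * ((2 * k - 1) * π / t + φ) = (t * φ + π) + (k - 1 : ℤ) * (2 * π) := by
    push_cast; field_simp; ring
  rw [this, cos_add_int_mul_two_pi, cos_add_pi]

theorem Complex.re_ofReal_mul_polar_zpow_neg_div (a r ψ : ℝ) (n : ℕ) :
    ((a : ℂ) * ((r : ℂ) * exp (ψ * I)) ^ (-(n : ℤ)) / n).re
      = a * Real.cos (n * ψ) / (n * r ^ n) := by
  have : (a : ℂ) * ((r : ℂ) * exp (ψ * I)) ^ (-(n : ℤ)) / n
      = ((a / (n * r ^ n) : ℝ) : ℂ) * exp ((-(n * ψ) : ℝ) * I) := by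
    rw [zpow_neg, zpow_natCast, mul_pow, ← exp_nat_mul, mul_inv, ← exp_neg]
    push_cast
    ring_nf
  rw [this, re_ofReal_mul, exp_ofReal_mul_I_re, Real.cos_neg]
  ring

theorem pow_le_div_pow_of_le_one {r : ℝ} (hr0 : 0 < r) (hr1 : r ≤ 1) {j : ℕ} (hj : 1 ≤ j)
    (N : ℕ) : r ^ j ≤ r / r ^ N := by
  rw [le_div_iff₀ (by positivity), ← pow_add]
  simpa using pow_le_pow_of_le_one hr0.le hr1 (by omega : 1 ≤ j + N)

theorem inv_pow_le_div_pow_of_le_one {r : ℝ} (hr0 : 0 < r) (hr1 : r ≤ 1) {j N : ℕ}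
    (hjN : j < N) : (r ^ j)⁻¹ ≤ r / r ^ N := by
  rw [inv_eq_one_div, div_le_div_iff₀ (by positivity) (by positivity), one_mul, ← pow_succ']
  exact pow_le_pow_of_le_one hr0.le hr1 hjN

noncomputable def laurentTerm (c : ℂ) (k : ℕ) (z : ℂ) : ℂ :=
  -c * z ^ k / k + starRingEnd ℂ c * z ^ (-(k : ℤ)) / k

theorem norm_neg_mul_pow_div_le {z : ℂ} (hz0 : 0 < ‖z‖) (hz1 : ‖z‖ ≤ 1) (c : ℂ) {N : ℕ}
    (hN : 1 ≤ N) :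
    ‖-c * z ^ N / N‖ ≤ ‖c‖ * (‖z‖ / ‖z‖ ^ N) := by
  rw [norm_div, norm_mul, norm_neg, norm_pow, Complex.norm_natCast]
  calc ‖c‖ * ‖z‖ ^ N / N ≤ ‖c‖ * ‖z‖ ^ N :=
        div_le_self (by positivity) (by exact_mod_cast hN)
    _ ≤ ‖c‖ * (‖z‖ / ‖z‖ ^ N) := by
        gcongr; exact pow_le_div_pow_of_le_one hz0 hz1 hN N

theorem norm_laurentTerm_le {z : ℂ} (hz0 : 0 < ‖z‖) (hz1 : ‖z‖ ≤ 1) (c : ℂ) {j N : ℕ}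
    (hj : 1 ≤ j) (hjN : j < N) :
    ‖laurentTerm c j z‖ ≤ 2 * ‖c‖ * (‖z‖ / ‖z‖ ^ N) := by
  have hj' : (1 : ℝ) ≤ j := by exact_mod_cast hj
  calc ‖laurentTerm c j z‖
      ≤ ‖c‖ * ‖z‖ ^ j / j + ‖c‖ * (‖z‖ ^ j)⁻¹ / j := by
        refine (norm_add_le _ _).trans_eq ?_
        rw [norm_div, norm_mul, norm_neg, norm_pow, Complex.norm_natCast, norm_div, norm_mul,
          Complex.norm_conj, norm_zpow, Complex.norm_natCast, zpow_neg, zpow_natCast]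
    _ ≤ ‖c‖ * ‖z‖ ^ j + ‖c‖ * (‖z‖ ^ j)⁻¹ := by
        gcongr <;> exact div_le_self (by positivity) hj'
    _ ≤ ‖c‖ * (‖z‖ / ‖z‖ ^ N) + ‖c‖ * (‖z‖ / ‖z‖ ^ N) := by
        gcongr
        · exact pow_le_div_pow_of_le_one hz0 hz1 hj N
        · exact inv_pow_le_div_pow_of_le_one hz0 hz1 hjN
    _ = 2 * ‖c‖ * (‖z‖ / ‖z‖ ^ N) := by ring

theorem re_sum_laurentTerm_le {z : ℂ} (hz0 : 0 < ‖z‖) (hz1 : ‖z‖ ≤ 1) (c : ℕ → ℂ) {N : ℕ}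
    (hN : 1 ≤ N) :
    (∑ k ∈ Finset.Icc 1 N, laurentTerm (c k) k z).re
      ≤ (starRingEnd ℂ (c N) * z ^ (-(N : ℤ)) / N).re
        + 2 * (∑ k ∈ Finset.Icc 1 N, ‖c k‖) * (‖z‖ / ‖z‖ ^ N) := by
  set ρ := ‖z‖ / ‖z‖ ^ N
  have hN_mem : N ∈ Finset.Icc 1 N := Finset.mem_Icc.mpr ⟨hN, le_rfl⟩
  have hlower : (∑ k ∈ Finset.Icc 1 N \ {N}, laurentTerm (c k) k z).re
      ≤ ∑ k ∈ Finset.Icc 1 N \ {N}, 2 * ‖c k‖ * ρ := by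
    rw [re_sum]
    refine Finset.sum_le_sum fun j hj => (re_le_norm _).trans ?_
    obtain ⟨hj, hjN⟩ := Finset.mem_sdiff.mp hj
    obtain ⟨hj1, hjN'⟩ := Finset.mem_Icc.mp hj
    exact norm_laurentTerm_le hz0 hz1 _ hj1 (lt_of_le_of_ne hjN' (by simpa using hjN))
  have htop : (-c N * z ^ N / N).re ≤ 2 * ‖c N‖ * ρ := by
    have := norm_neg_mul_pow_div_le hz0 hz1 (c N) hN
    have hρ : 0 ≤ ‖c N‖ * ρ := by positivity
    linarith [re_le_norm (-c N * z ^ N / N)]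
  have hsplit : 2 * (∑ k ∈ Finset.Icc 1 N, ‖c k‖) * ρ
      = ∑ k ∈ Finset.Icc 1 N \ {N}, 2 * ‖c k‖ * ρ + 2 * ‖c N‖ * ρ := by
    rw [Finset.mul_sum, Finset.sum_mul, Finset.sum_eq_sum_sdiff_singleton_add hN_mem]
  rw [Finset.sum_eq_sum_sdiff_singleton_add hN_mem, hsplit, add_re, laurentTerm, add_re]
  linarith

open Real in
theorem re_ofReal_mul_sector_zpow_neg_div_le {N : ℕ} (hN : 0 < N) {a δ φ : ℝ} (ha : 0 ≤ a)
    (hδ : 0 ≤ δ) (hφ : |φ| ≤ π / (2 * N) - δ) {k : ℤ} {θ : ℝ} (hθ : θ = (2 * k - 1) * π / N)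
    {r : ℝ} (hr : 0 ≤ r) :
    ((a : ℂ) * ((r : ℂ) * exp ((θ + φ : ℝ) * I)) ^ (-(N : ℤ)) / N).re
      ≤ -(a * Real.sin (N * δ) / N) / r ^ N := by
  have hN0 : (0 : ℝ) < N := by exact_mod_cast hN
  have hNφ : |N * φ| ≤ π / 2 - N * δ := calc
    |N * φ| = N * |φ| := by rw [abs_mul, abs_of_pos hN0]
    _ ≤ N * (π / (2 * N) - δ) := by gcongr
    _ = π / 2 - N * δ := by field_simp
  have hcos := sin_le_cos_of_abs_le (by nlinarith [pi_pos]) hNφ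
  rw [re_ofReal_mul_polar_zpow_neg_div, hθ, cos_mul_odd_mul_pi_div_add hN0.ne', mul_neg, neg_div,
    neg_div, neg_le_neg_iff, div_div]
  gcongr

theorem stmt_12_general (N : ℕ) (hN : 1 ≤ N) (c : ℕ → ℂ)
    (hcNim : (c N).im = 0) (hcNre : 0 < (c N).re)
    (Q : ℂ → ℂ)
    (hQ : ∀ z : ℂ, z ≠ 0 → Q z =
      ∑ k ∈ Finset.Icc 1 N,
        (-(c k) * z ^ k / (k : ℂ) + starRingEnd ℂ (c k) * z ^ (-(k : ℤ)) / (k : ℂ)))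
    (k : ℕ)
    (θ : ℝ) (hθ : θ = (2 * (k : ℝ) - 1) * Real.pi / N)
    (δ : ℝ) (hδ : δ ∈ Set.Ioo 0 (Real.pi / (2 * N))) :
    ∃ a r₀ : ℝ, 0 < a ∧ 0 < r₀ ∧ ∀ r φ : ℝ, 0 < r → r ≤ r₀ →
      |φ| ≤ Real.pi / (2 * N) - δ →
        (Q ((r : ℂ) * Complex.exp ((θ + φ) * Complex.I))).re ≤ -a / r ^ N := by
  set b := (c N).re * Real.sin (N * δ) / N
  have hb : 0 < b := by
    have := Real.sin_natCast_mul_pos hN hδ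
    positivity
  set C := ∑ j ∈ Finset.Icc 1 N, ‖c j‖
  refine ⟨b / 2, min 1 (b / (4 * (C + 1))), by positivity, by positivity, ?_⟩
  intro r φ hr hrr₀ hφ
  set z := (r : ℂ) * exp (((θ + φ : ℝ) : ℂ) * I)
  have hz : ‖z‖ = r := by
    rw [norm_mul, norm_exp_ofReal_mul_I, Complex.norm_real, Real.norm_of_nonneg hr.le, mul_one]
  have hcN : starRingEnd ℂ (c N) = ((c N).re : ℂ) := Complex.ext (by simp) (by simp [hcNim])
  have hsmall : 2 * C * r ≤ b / 2 := by
    have := (le_div_iff₀ (by positivity)).mp (hrr₀.trans (min_le_right _ _))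
    nlinarith [show 0 ≤ C by positivity]
  calc (Q ((r : ℂ) * Complex.exp ((θ + φ) * Complex.I))).re
      = (∑ k ∈ Finset.Icc 1 N, laurentTerm (c k) k z).re := by
        rw [← ofReal_add, hQ z (norm_pos_iff.mp (hz ▸ hr))]; rfl
    _ ≤ (starRingEnd ℂ (c N) * z ^ (-(N : ℤ)) / N).re + 2 * C * (r / r ^ N) := by
        rw [← hz]
        exact re_sum_laurentTerm_le (hz ▸ hr) (hz ▸ (hrr₀.trans (min_le_left _ _))) c hN
    _ ≤ -b / r ^ N + 2 * C * (r / r ^ N) := by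
        rw [hcN]
        gcongr
        exact re_ofReal_mul_sector_zpow_neg_div_le hN hcNre.le hδ.1.le hφ
          (θ := θ) (k := k) (by rw [hθ, Int.cast_natCast]) hr.le
    _ = (-b + 2 * C * r) / r ^ N := by ring
    _ ≤ -(b / 2) / r ^ N := by gcongr; linarith

/-- Uniform decay of `Re Q` in a subsector around `θ_k = (2k−1)π/N`: with
`Q(z) = Σ_{k=1}^N (−c_k z^k/k + conj(c_k) z^{−k}/k)` and `c_N > 0` real, for every
`δ ∈ (0, π/(2N))` there exist `a_N(δ) > 0` and `r₀ > 0` such that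
`Re[Q(z)] ≤ −a_N(δ)/|z|^N` for `z = r e^{i(θ_k+φ)}` with `0 < r ≤ r₀` and
`|φ| ≤ π/(2N) − δ`. -/
theorem stmt_12 (N : ℕ) (hN : 1 ≤ N) (c : ℕ → ℂ)
    (hcNim : (c N).im = 0) (hcNre : 0 < (c N).re)
    (Q : ℂ → ℂ)
    (hQ : ∀ z : ℂ, z ≠ 0 → Q z =
      ∑ k ∈ Finset.Icc 1 N,
        (-(c k) * z ^ k / (k : ℂ) + starRingEnd ℂ (c k) * z ^ (-(k : ℤ)) / (k : ℂ)))
    (k : ℕ) (hk1 : 1 ≤ k) (hkN : k ≤ N)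
    (θ : ℝ) (hθ : θ = (2 * (k : ℝ) - 1) * Real.pi / N)
    (δ : ℝ) (hδ : δ ∈ Set.Ioo 0 (Real.pi / (2 * N))) :
    ∃ a r₀ : ℝ, 0 < a ∧ 0 < r₀ ∧ ∀ r φ : ℝ, 0 < r → r ≤ r₀ →
      |φ| ≤ Real.pi / (2 * N) - δ →
        (Q ((r : ℂ) * Complex.exp ((θ + φ) * Complex.I))).re ≤ -a / r ^ N :=
  stmt_12_general N hN c hcNim hcNre Q hQ k θ hθ δ hδ
end

section
/- Let A be an N×N complex matrix with rows C₁ᵀ,…,C_Nᵀ such that C_{N−k} = −conj(C_k) for 1 ≤ k ≤ N−1 and α C_N is real-valued for some α ∈ ℂ with |α| = 1. If V ∈ ℂ^N satisfies AV = 0, then A·conj(V) = 0. Consequently, if the kernel of A is one-dimensional and V ≠ 0, there exists θ ∈ ℝ such that e^{iθ} V ∈ ℝ^N. -/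
/-!
Every row of `A` is a scalar multiple of the conjugate of some row (`-1` times the mirrored row,
or `conj α / α` times the last row itself), so `C ⬝ᵥ conj V = c · conj (C' ⬝ᵥ V) = 0` row by row.
A one-dimensional kernel then gives `conj V = μ V`; taking norms at a nonzero entry gives
`|μ| = 1`, and for `μ = e^{2iθ}` the vector `e^{iθ} V` is its own conjugate.
-/

open Matrix ComplexConjugate

theorem dotProduct_star_eq_zero_of_eq_smul_star {ι R : Type*} [Fintype ι] [CommRing R]
    [StarRing R] {r s v : ι → R} (c : R) (hr : r = c • star s) (hs : s ⬝ᵥ v = 0) :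
    r ⬝ᵥ star v = 0 := by
  rw [hr, smul_dotProduct, star_dotProduct_star, dotProduct_comm, hs, star_zero, smul_zero]

theorem Complex.eq_mul_conj_of_im_mul_eq_zero {α a : ℂ} (hα : α ≠ 0) (h : (α * a).im = 0) :
    a = (conj α / α) * conj a := by
  have hreal : conj α * conj a = α * a := by rw [← map_mul, Complex.conj_eq_iff_im.mpr h]
  field_simp
  rw [hreal, mul_comm]

theorem Matrix.mulVec_star_eq_zero_of_rows_conj {n : ℕ} {A : Matrix (Fin (n + 1)) (Fin (n + 1)) ℂ}
    (hrows : ∀ i j : Fin (n + 1), (i : ℕ) + (j : ℕ) + 2 = n + 1 →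
      ∀ l, A j l = -(conj (A i l)))
    {α : ℂ} (hα : α ≠ 0) (hlast : ∀ l, (α * A (Fin.last n) l).im = 0)
    {V : Fin (n + 1) → ℂ} (hV : A *ᵥ V = 0) :
    A *ᵥ star V = 0 := by
  have hrow : ∀ i, A i ⬝ᵥ V = 0 := fun i => congrFun hV i
  funext i
  induction i using Fin.lastCases with
  | last =>
    refine dotProduct_star_eq_zero_of_eq_smul_star (conj α / α) ?_ (hrow (Fin.last n))
    funext l
    exact Complex.eq_mul_conj_of_im_mul_eq_zero hα (hlast l)
  | cast k =>
    refine dotProduct_star_eq_zero_of_eq_smul_star (-1) ?_ (hrow (Fin.rev k).castSucc)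
    funext l
    have hk : ((Fin.rev k).castSucc : ℕ) + (k.castSucc : ℕ) + 2 = n + 1 := by
      simp only [Fin.val_castSucc, Fin.val_rev]
      omega
    simp [hrows _ _ hk l]

theorem Complex.exists_exp_mul_I_mul_im_eq_zero_of_conj_eq_mul {ι : Type*} {V : ι → ℂ} {c : ℂ}
    (hc : ∀ i, conj (V i) = c * V i) :
    ∃ θ : ℝ, ∀ i, (exp (θ * I) * V i).im = 0 := by
  by_cases hV : ∀ i, V i = 0
  · exact ⟨0, fun i => by simp [hV i]⟩
  push Not at hV
  obtain ⟨i₀, hi₀⟩ := hV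
  have hc_norm : ‖c‖ = 1 := by
    have h := congrArg norm (hc i₀)
    rw [Complex.norm_conj, norm_mul] at h
    exact (mul_eq_right₀ (norm_ne_zero_iff.mpr hi₀)).mp h.symm
  obtain ⟨φ, rfl⟩ : ∃ φ : ℝ, c = exp (φ * I) :=
    ⟨arg c, by simpa [hc_norm] using (norm_mul_exp_arg_mul_I c).symm⟩
  refine ⟨φ / 2, fun i => ?_⟩
  rw [← conj_eq_iff_im, map_mul, hc i, ← exp_conj, ← mul_assoc, ← exp_add]
  congr 2
  simp only [map_mul, conj_ofReal, conj_I]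
  push_cast
  ring

theorem stmt_15_general (n : ℕ) (A : Matrix (Fin (n + 1)) (Fin (n + 1)) ℂ)
    (hrows : ∀ i j : Fin (n + 1), (i : ℕ) + (j : ℕ) + 2 = n + 1 →
      ∀ l, A j l = -(starRingEnd ℂ (A i l)))
    (α : ℂ) (hα : ‖α‖ = 1)
    (hlast : ∀ l, (α * A (Fin.last n) l).im = 0)
    (V : Fin (n + 1) → ℂ) (hV : A.mulVec V = 0)
    (hker : ∀ W : Fin (n + 1) → ℂ, A.mulVec W = 0 → ∃ c : ℂ, W = c • V) :
    A.mulVec (fun i => starRingEnd ℂ (V i)) = 0 ∧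
    ∃ θ : ℝ, ∀ i, (Complex.exp ((θ : ℂ) * Complex.I) * V i).im = 0 := by
  have hα₀ : α ≠ 0 := norm_ne_zero_iff.mp (by rw [hα]; exact one_ne_zero)
  have hconj : A *ᵥ star V = 0 := mulVec_star_eq_zero_of_rows_conj hrows hα₀ hlast hV
  obtain ⟨c, hc⟩ := hker _ hconj
  exact ⟨hconj, Complex.exists_exp_mul_I_mul_im_eq_zero_of_conj_eq_mul fun i => congrFun hc i⟩

/-- Reality structure of the kernel of the Evans matrix: if the rows `C₁, …, C_{n+1}`
of `A` satisfy `C_{N−k} = −conj(C_k)` for `1 ≤ k ≤ N−1` (with `N = n+1`) and the last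
row is real after multiplication by a unimodular `α`, then `AV = 0` implies
`A conj(V) = 0`; consequently, if every kernel vector is a multiple of a fixed nonzero
kernel vector `V` (one-dimensional kernel), then `e^{iθ}V` is real for some `θ ∈ ℝ`. -/
theorem stmt_15 (n : ℕ) (A : Matrix (Fin (n + 1)) (Fin (n + 1)) ℂ)
    (hrows : ∀ i j : Fin (n + 1), (i : ℕ) + (j : ℕ) + 2 = n + 1 →
      ∀ l, A j l = -(starRingEnd ℂ (A i l)))
    (α : ℂ) (hα : ‖α‖ = 1)
    (hlast : ∀ l, (α * A (Fin.last n) l).im = 0)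
    (V : Fin (n + 1) → ℂ) (hV : A.mulVec V = 0) (hV0 : V ≠ 0)
    (hker : ∀ W : Fin (n + 1) → ℂ, A.mulVec W = 0 → ∃ c : ℂ, W = c • V) :
    A.mulVec (fun i => starRingEnd ℂ (V i)) = 0 ∧
    ∃ θ : ℝ, ∀ i, (Complex.exp ((θ : ℂ) * Complex.I) * V i).im = 0 :=
  stmt_15_general n A hrows α hα hlast V hV hker
end
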